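/- arXiv:1203.3200 — 3 statements merged into one kernel-verified Lean document; each statement's English description precedes it below -/
import Mathlib

section
/- Let α > 0 and let m = |I| + |J|. Then: (a) {x ∈ S : G(x) < α} ⊆ N(I,J,α) ⊆ {x ∈ S : G(x) ≤ α}; and (b) {x ∈ S : H(x) < α} ⊆ N(I,J,α) ⊆ {x ∈ S : H(x) ≤ m·α}. -/
open Set Pointwise Filter Topology Bornology Function

variable {X : Type*} [NormedAddCommGroup X] [NormedSpace ℝ X]

/-- The Minkowski gauge of `F`: `ρ_F(x) = inf {t ≥ 0 : x ∈ t • F}`. -/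
noncomputable def rhoF (F : Set X) (x : X) : ℝ :=
  sInf {t : ℝ | 0 ≤ t ∧ x ∈ t • F}

/-- The maximal time function `C_F(x; Q) = sup {ρ_F(q - x) : q ∈ Q}`. -/
noncomputable def maxTime (F Q : Set X) (x : X) : ℝ :=
  sSup ((fun q => rhoF F (q - x)) '' Q)

/-- The minimal time function `T_F(x; Θ) = inf {ρ_F(q - x) : q ∈ Θ}`. -/
noncomputable def minTime (F Θ : Set X) (x : X) : ℝ :=
  sInf ((fun q => rhoF F (q - x)) '' Θ)

/-- `G(x) = max {C_F(x; Ω_i), T_F(x; Θ_j) : i ∈ I, j ∈ J}`. -/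
noncomputable def GFun {ι κ : Type*} (F : Set X) (I : Finset ι) (J : Finset κ)
    (Ω : ι → Set X) (Θ : κ → Set X) (x : X) : ℝ :=
  sSup ((fun i => maxTime F (Ω i) x) '' ↑I ∪ (fun j => minTime F (Θ j) x) '' ↑J)

/-- `H(x) = Σ_{i∈I} C_F(x; Ω_i) + Σ_{j∈J} T_F(x; Θ_j)`. -/
noncomputable def HFun {ι κ : Type*} (F : Set X) (I : Finset ι) (J : Finset κ)
    (Ω : ι → Set X) (Θ : κ → Set X) (x : X) : ℝ :=
  ∑ i ∈ I, maxTime F (Ω i) x + ∑ j ∈ J, minTime F (Θ j) x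

/-- `N(I,J,α) = S ∩ [⋂_{i∈I} ⋂_{ω∈Ω_i} (ω - α•F)] ∩ [⋂_{j∈J} (Θ_j - α•F)]`. -/
def NSet {ι κ : Type*} (F : Set X) (I : Finset ι) (J : Finset κ)
    (Ω : ι → Set X) (Θ : κ → Set X) (S : Set X) (α : ℝ) : Set X :=
  S ∩ (⋂ i ∈ I, ⋂ ω ∈ Ω i, (({ω} : Set X) - α • F)) ∩ ⋂ j ∈ J, (Θ j - α • F)

lemma rhoF_eq_gauge {F : Set X} (hF0 : (0:X) ∈ F) (x : X) : rhoF F x = gauge F x := by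
  rcases eq_or_ne x 0 with rfl | hx
  · rw [gauge_zero, rhoF]
    have h0 : (0:ℝ) ∈ {t : ℝ | 0 ≤ t ∧ (0:X) ∈ t • F} :=
      ⟨le_refl 0, by rw [zero_smul_set ⟨0, hF0⟩]; exact rfl⟩
    exact le_antisymm (csInf_le ⟨0, fun t ht => ht.1⟩ h0) (le_csInf ⟨0, h0⟩ fun t ht => ht.1)
  · rw [rhoF, gauge_def]
    congr 1
    ext t
    simp only [mem_setOf_eq, mem_sep_iff, mem_Ioi]
    constructor
    · rintro ⟨ht, hm⟩
      rcases ht.lt_or_eq with h | rfl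
      · exact ⟨h, hm⟩
      · exact absurd (mem_singleton_iff.1 (zero_smul_set_subset F hm)) hx
    · exact fun ⟨h, hm⟩ => ⟨h.le, hm⟩

lemma rhoF_nonneg {F : Set X} (hF0 : (0:X) ∈ F) (x : X) : 0 ≤ rhoF F x := by
  rw [rhoF_eq_gauge hF0]; exact gauge_nonneg x

lemma mem_smul_iff_rhoF_le {F : Set X} (hFc : IsClosed F) (hFconv : Convex ℝ F)
    (hF0 : (0:X) ∈ interior F) {α : ℝ} (hα : 0 < α) {x : X} :
    x ∈ α • F ↔ rhoF F x ≤ α := by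
  have h0F : (0:X) ∈ F := interior_subset hF0
  rw [rhoF_eq_gauge h0F]
  constructor
  · exact fun h => gauge_le_of_mem hα.le h
  · intro h
    have habs : Absorbent ℝ F := absorbent_nhds_zero (mem_interior_iff_mem_nhds.1 hF0)
    have : gauge F (α⁻¹ • x) ≤ 1 := by
      rw [gauge_smul_of_nonneg (inv_nonneg.2 hα.le), smul_eq_mul]
      rw [inv_mul_le_iff₀ hα, mul_one]; exact h
    have := mem_closure_of_gauge_le_one hFconv h0F habs this
    rw [hFc.closure_eq] at this
    rwa [Set.mem_smul_set_iff_inv_smul_mem₀ hα.ne']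

/-- Lemma 2.1. -/
theorem stmt0
    {ι κ : Type*} (F : Set X) (I : Finset ι) (J : Finset κ)
    (Ω : ι → Set X) (Θ : κ → Set X) (S : Set X)
    (hFc : IsClosed F) (hFb : IsBounded F) (hFconv : Convex ℝ F)
    (hF0 : (0 : X) ∈ interior F)
    (hΩne : ∀ i ∈ I, (Ω i).Nonempty) (hΩc : ∀ i ∈ I, IsClosed (Ω i))
    (hΩb : ∀ i ∈ I, IsBounded (Ω i))
    (hΘne : ∀ j ∈ J, (Θ j).Nonempty) (hΘc : ∀ j ∈ J, IsClosed (Θ j))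
    (hSne : S.Nonempty) (hSc : IsClosed S)
    (hIJ : I.Nonempty ∨ J.Nonempty)
    (α : ℝ) (hα : 0 < α) :
    ({x ∈ S | GFun F I J Ω Θ x < α} ⊆ NSet F I J Ω Θ S α ∧
      NSet F I J Ω Θ S α ⊆ {x ∈ S | GFun F I J Ω Θ x ≤ α}) ∧
    ({x ∈ S | HFun F I J Ω Θ x < α} ⊆ NSet F I J Ω Θ S α ∧
      NSet F I J Ω Θ S α ⊆ {x ∈ S | HFun F I J Ω Θ x ≤ (I.card + J.card : ℝ) * α}) := by
  have h0F : (0:X) ∈ F := interior_subset hF0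
  have key : ∀ y : X, y ∈ α • F ↔ rhoF F y ≤ α :=
    fun y => mem_smul_iff_rhoF_le hFc hFconv hF0 hα
  obtain ⟨r, hr, hball⟩ := Metric.mem_nhds_iff.1 (mem_interior_iff_mem_nhds.1 hF0)
  have habs : Absorbent ℝ F := absorbent_nhds_zero (mem_interior_iff_mem_nhds.1 hF0)
  -- boundedness of rho-images of bounded sets
  have hbdd : ∀ (x : X) (Q : Set X), IsBounded Q →
      BddAbove ((fun q => rhoF F (q - x)) '' Q) := by
    intro x Q hQ
    obtain ⟨R, hR⟩ := hQ.exists_norm_le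
    refine ⟨(R + ‖x‖) / r, ?_⟩
    rintro y ⟨q, hq, rfl⟩
    have h1 : rhoF F (q - x) ≤ ‖q - x‖ / r := by
      rw [rhoF_eq_gauge h0F]
      calc gauge F (q - x) ≤ gauge (Metric.ball (0:X) r) (q - x) :=
            gauge_mono (absorbent_ball_zero hr) hball _
        _ = ‖q - x‖ / r := gauge_ball hr.le _
    refine h1.trans ?_
    gcongr
    calc ‖q - x‖ ≤ ‖q‖ + ‖x‖ := norm_sub_le _ _
      _ ≤ R + ‖x‖ := by linarith [hR q hq]
  -- per-element bounds
  have hCle : ∀ (x : X), ∀ i ∈ I, ∀ ω ∈ Ω i,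
      rhoF F (ω - x) ≤ maxTime F (Ω i) x := fun x i hi ω hω =>
    le_csSup (hbdd x _ (hΩb i hi)) ⟨ω, hω, rfl⟩
  have hCpos : ∀ (x : X), ∀ i ∈ I, 0 ≤ maxTime F (Ω i) x := by
    intro x i hi
    obtain ⟨q, hq⟩ := hΩne i hi
    exact (rhoF_nonneg h0F _).trans (hCle x i hi q hq)
  have hTpos : ∀ (x : X) (j : κ), 0 ≤ minTime F (Θ j) x :=
    fun x j => Real.sInf_nonneg (by rintro y ⟨q, hq, rfl⟩; exact rhoF_nonneg h0F _)
  -- from NSet membership, per-term ≤ α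
  have hC_of_N : ∀ x ∈ NSet F I J Ω Θ S α, ∀ i ∈ I, maxTime F (Ω i) x ≤ α := by
    rintro x ⟨⟨hxS, hxI⟩, hxJ⟩ i hi
    apply Real.sSup_le _ hα.le
    rintro y ⟨ω, hω, rfl⟩
    have hx : x ∈ ({ω} : Set X) - α • F := by
      simp only [mem_iInter] at hxI; exact hxI i hi ω hω
    obtain ⟨a, ha, b, hb, hab⟩ := Set.mem_sub.1 hx
    rw [mem_singleton_iff] at ha
    have hωb : ω - x = b := by rw [← hab, ha]; abel
    show rhoF F (ω - x) ≤ α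
    rw [hωb]; exact (key b).1 hb
  have hT_of_N : ∀ x ∈ NSet F I J Ω Θ S α, ∀ j ∈ J, minTime F (Θ j) x ≤ α := by
    rintro x ⟨⟨hxS, hxI⟩, hxJ⟩ j hj
    have hx : x ∈ Θ j - α • F := by
      simp only [mem_iInter] at hxJ; exact hxJ j hj
    obtain ⟨a, ha, b, hb, hab⟩ := Set.mem_sub.1 hx
    have hab' : a - x = b := by rw [← hab]; abel
    have hle : minTime F (Θ j) x ≤ rhoF F (a - x) :=
      csInf_le ⟨0, by rintro y ⟨q, hq, rfl⟩; exact rhoF_nonneg h0F _⟩ ⟨a, ha, rfl⟩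
    refine hle.trans ?_
    rw [hab']; exact (key b).1 hb
  -- strict per-term bounds imply NSet membership
  have hN_of_lt : ∀ x ∈ S, (∀ i ∈ I, maxTime F (Ω i) x < α) →
      (∀ j ∈ J, minTime F (Θ j) x < α) → x ∈ NSet F I J Ω Θ S α := by
    intro x hxS hC hT
    refine ⟨⟨hxS, ?_⟩, ?_⟩
    · simp only [mem_iInter]
      intro i hi ω hω
      have : rhoF F (ω - x) ≤ α := ((hCle x i hi ω hω).trans_lt (hC i hi)).le
      exact Set.mem_sub.2 ⟨ω, rfl, ω - x, (key _).2 this, by abel⟩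
    · simp only [mem_iInter]
      intro j hj
      obtain ⟨y, ⟨q, hq, rfl⟩, hy⟩ :=
        exists_lt_of_csInf_lt ((hΘne j hj).image _) (hT j hj)
      exact Set.mem_sub.2 ⟨q, hq, q - x, (key _).2 hy.le, by abel⟩
  have hGbdd : ∀ x : X, BddAbove
      ((fun i => maxTime F (Ω i) x) '' ↑I ∪ (fun j => minTime F (Θ j) x) '' ↑J) :=
    fun x => ((I.finite_toSet.image _).union (J.finite_toSet.image _)).bddAbove
  constructor
  · constructor
    · rintro x ⟨hxS, hG⟩
      refine hN_of_lt x hxS (fun i hi => ?_) (fun j hj => ?_)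
      · exact lt_of_le_of_lt (le_csSup (hGbdd x) (Or.inl ⟨i, hi, rfl⟩)) hG
      · exact lt_of_le_of_lt (le_csSup (hGbdd x) (Or.inr ⟨j, hj, rfl⟩)) hG
    · intro x hx
      refine ⟨hx.1.1, Real.sSup_le ?_ hα.le⟩
      rintro y (⟨i, hi, rfl⟩ | ⟨j, hj, rfl⟩)
      · exact hC_of_N x hx i hi
      · exact hT_of_N x hx j hj
  · constructor
    · rintro x ⟨hxS, hH⟩
      refine hN_of_lt x hxS (fun i hi => ?_) (fun j hj => ?_)
      · refine lt_of_le_of_lt ?_ hH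
        rw [HFun]
        have h1 : maxTime F (Ω i) x ≤ ∑ i ∈ I, maxTime F (Ω i) x :=
          Finset.single_le_sum (fun i hi => hCpos x i hi) hi
        have h2 : (0:ℝ) ≤ ∑ j ∈ J, minTime F (Θ j) x :=
          Finset.sum_nonneg fun j _ => hTpos x j
        linarith
      · refine lt_of_le_of_lt ?_ hH
        rw [HFun]
        have h1 : minTime F (Θ j) x ≤ ∑ j ∈ J, minTime F (Θ j) x :=
          Finset.single_le_sum (fun j _ => hTpos x j) hj
        have h2 : (0:ℝ) ≤ ∑ i ∈ I, maxTime F (Ω i) x :=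
          Finset.sum_nonneg fun i hi => hCpos x i hi
        linarith
    · intro x hx
      refine ⟨hx.1.1, ?_⟩
      rw [HFun]
      have h1 : ∑ i ∈ I, maxTime F (Ω i) x ≤ ∑ _i ∈ I, α :=
        Finset.sum_le_sum fun i hi => hC_of_N x hx i hi
      have h2 : ∑ j ∈ J, minTime F (Θ j) x ≤ ∑ _j ∈ J, α :=
        Finset.sum_le_sum fun j hj => hT_of_N x hx j hj
      have : (∑ _i ∈ I, α) + (∑ _j ∈ J, α) = (I.card + J.card : ℝ) * α := by
        simp [Finset.sum_const, nsmul_eq_mul]; ring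
      linarith
end

section
/- Let S be a convex subset of a real vector space and let g : S → ℝ be a nonnegative convex function on S. Then the function h(x) := (g(x))² is strictly convex on S if and only if g is not constant on any segment [a,b] ⊆ S with a ≠ b. -/
/-!
For `z = a • x + b • y` with `a, b > 0`, `a + b = 1`, convexity and `g ≥ 0` give
`g z ^ 2 ≤ (a * g x + b * g y) ^ 2 ≤ a * g x ^ 2 + b * g y ^ 2`, the gap in the second inequality
being `a * b * (g x - g y) ^ 2`. So strict convexity of `g ^ 2` can only fail when
`g x = g y = g z`, and a convex function whose value at an interior point of a segment dominates
its values at the endpoints is constant on that segment.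
-/

open Set

section ConvexOn

variable {𝕜 E β : Type*} [Field 𝕜] [LinearOrder 𝕜] [IsStrictOrderedRing 𝕜]
  [AddCommGroup E] [Module 𝕜 E] [AddCommGroup β] [LinearOrder β] [IsOrderedAddMonoid β]
  [Module 𝕜 β] [PosSMulStrictMono 𝕜 β] {s : Set E} {f : E → β} {x y z : E}

theorem ConvexOn.le_of_mem_openSegment_of_mem_segment (hf : ConvexOn 𝕜 s f) (hx : x ∈ s)
    (hy : y ∈ s) (hz : z ∈ openSegment 𝕜 x y) (hxz : f x ≤ f z) (hyz : f y ≤ f z) {w : E}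
    (hw : w ∈ segment 𝕜 x y) : f z ≤ f w := by
  have hws : w ∈ s := hf.1.segment_subset hx hy hw
  have hw_line : w ∈ range (AffineMap.lineMap x y : 𝕜 → E) := by
    rw [segment_eq_image_lineMap] at hw
    exact image_subset_range _ _ hw
  rcases openSegment_subset_union x y hw_line hz with rfl | hzxw | hzwy
  · exact le_rfl
  · exact hf.le_right_of_left_le hx hws hzxw hxz
  · exact hf.le_left_of_right_le hws hy hzwy hyz

theorem ConvexOn.eq_on_segment_of_mem_openSegment (hf : ConvexOn 𝕜 s f) (hx : x ∈ s)
    (hy : y ∈ s) (hz : z ∈ openSegment 𝕜 x y) (hxz : f x ≤ f z) (hyz : f y ≤ f z) :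
    ∀ w ∈ segment 𝕜 x y, f w = f z := fun _ hw =>
  le_antisymm ((hf.le_on_segment hx hy hw).trans (max_le hxz hyz))
    (hf.le_of_mem_openSegment_of_mem_segment hx hy hz hxz hyz hw)

end ConvexOn

theorem eq_of_combo_sq_le_sq_of_le_combo {a b u v p : ℝ} (ha : 0 < a) (hb : 0 < b)
    (hab : a + b = 1) (hp : 0 ≤ p) (hpm : p ≤ a * u + b * v)
    (hle : a * u ^ 2 + b * v ^ 2 ≤ p ^ 2) : u = p ∧ v = p := by
  obtain rfl : b = 1 - a := by linarith
  have hpm_sq : p ^ 2 ≤ (a * u + (1 - a) * v) ^ 2 := pow_le_pow_left₀ hp hpm 2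
  have hgap : a * (1 - a) * (u - v) ^ 2 ≤ 0 := by nlinarith
  have huv : u = v := by
    have : (u - v) ^ 2 ≤ 0 := nonpos_of_mul_nonpos_right hgap (mul_pos ha hb)
    nlinarith [sq_nonneg (u - v)]
  subst huv
  constructor <;> nlinarith

/-- Lemma 3.1. -/
theorem stmt6 {Y : Type*} [AddCommGroup Y] [Module ℝ Y]
    (S : Set Y) (hS : Convex ℝ S) (g : Y → ℝ)
    (hg0 : ∀ x ∈ S, 0 ≤ g x) (hgconv : ConvexOn ℝ S g) :
    StrictConvexOn ℝ S (fun x => (g x) ^ 2) ↔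
      ∀ a b : Y, a ≠ b → segment ℝ a b ⊆ S → ¬ ∃ c : ℝ, ∀ x ∈ segment ℝ a b, g x = c := by
  constructor
  · rintro hsc a b hab hseg ⟨c, hc⟩
    have hlt := hsc.lt_on_openSegment (hseg (left_mem_segment ℝ a b))
      (hseg (right_mem_segment ℝ a b)) hab (midpoint_mem_openSegment a b)
    simp only [hc _ (openSegment_subset_segment ℝ a b (midpoint_mem_openSegment a b)),
      hc a (left_mem_segment ℝ a b), hc b (right_mem_segment ℝ a b), max_self] at hlt
    exact lt_irrefl _ hlt
  · refine fun hnonconst => ⟨hS, fun x hx y hy hxy a b ha hb hab => ?_⟩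
    by_contra hnotlt
    have hzS : a • x + b • y ∈ S := hS hx hy ha.le hb.le hab
    obtain ⟨hxz, hyz⟩ := eq_of_combo_sq_le_sq_of_le_combo ha hb hab (hg0 _ hzS)
      (hgconv.2 hx hy ha.le hb.le hab) (not_lt.mp hnotlt)
    exact hnonconst x y hxy (hS.segment_subset hx hy) ⟨g (a • x + b • y),
      hgconv.eq_on_segment_of_mem_openSegment hx hy ⟨a, b, ha, hb, hab, rfl⟩ hxz.le hyz.le⟩
end

section
/- Let S be a convex subset of a real normed space, let h_1, …, h_m (m ≥ 1) be nonnegative, continuous, convex functions on S, and define φ(x) := max{h_1(x), …, h_m(x)}. Suppose there are a, b ∈ S with a ≠ b, [a,b] ⊆ S, and a real number r > 0 such that φ(x) = r for all x ∈ [a,b]. Then there exist a segment [α,β] ⊆ [a,b] with α ≠ β and an index i₀ ∈ {1, …, m} such that h_{i₀}(x) = r for all x ∈ [α,β]. -/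
open Set

/-- Lemma 3.4. -/
theorem stmt9 {X : Type*} [NormedAddCommGroup X] [NormedSpace ℝ X]
    (S : Set X) (hS : Convex ℝ S) (m : ℕ) (hm : 1 ≤ m)
    (h : Fin m → X → ℝ)
    (hpos : ∀ i, ∀ x ∈ S, 0 ≤ h i x)
    (hcont : ∀ i, ContinuousOn (h i) S)
    (hconv : ∀ i, ConvexOn ℝ S (h i))
    (a b : X) (hab : a ≠ b) (hseg : segment ℝ a b ⊆ S)
    (r : ℝ) (hr : 0 < r)
    (hφ : ∀ x ∈ segment ℝ a b, sSup (Set.range fun i => h i x) = r) :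
    ∃ α ∈ segment ℝ a b, ∃ β ∈ segment ℝ a b, α ≠ β ∧
      segment ℝ α β ⊆ segment ℝ a b ∧
      ∃ i₀ : Fin m, ∀ x ∈ segment ℝ α β, h i₀ x = r := by
  have ha : a ∈ segment ℝ a b := left_mem_segment ℝ a b
  have hb : b ∈ segment ℝ a b := right_mem_segment ℝ a b
  have hle : ∀ i, ∀ x ∈ segment ℝ a b, h i x ≤ r := by
    intro i x hx
    rw [← hφ x hx]
    exact le_csSup (Set.finite_range _).bddAbove ⟨i, rfl⟩
  have hcmem : (1/2:ℝ)•a + (1/2:ℝ)•b ∈ segment ℝ a b :=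
    ⟨1/2, 1/2, by norm_num, by norm_num, by norm_num, rfl⟩
  obtain ⟨i, hic⟩ : ∃ i, h i ((1/2:ℝ)•a + (1/2:ℝ)•b) = r := by
    have hne : (Set.range fun i => h i ((1/2:ℝ)•a + (1/2:ℝ)•b)).Nonempty :=
      ⟨h ⟨0, hm⟩ _, ⟨⟨0, hm⟩, rfl⟩⟩
    have hmem := hne.csSup_mem (Set.finite_range _)
    rw [hφ _ hcmem] at hmem
    obtain ⟨i, hi⟩ := hmem
    exact ⟨i, hi⟩
  have hca : h i ((1/2:ℝ)•a + (1/2:ℝ)•b) ≤ (1/2) * h i a + (1/2) * h i b :=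
    (hconv i).2 (hseg ha) (hseg hb) (by norm_num) (by norm_num) (by norm_num)
  have hiale := hle i a ha
  have hible := hle i b hb
  have hia : h i a = r := by linarith
  have hib : h i b = r := by linarith
  refine ⟨a, ha, b, hb, hab, subset_rfl, i, ?_⟩
  intro x hx
  refine le_antisymm (hle i x hx) ?_
  obtain ⟨u, v, hu, hv, huv, hx'⟩ := hx
  rcases le_total u (1/2) with h12 | h12
  · -- v ≥ 1/2; write midpoint as convex combination of x and a
    have hv2 : (1/2:ℝ) ≤ v := by linarith
    have hvne : v ≠ 0 := by linarith
    set s : ℝ := 1/(2*v) with hs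
    have hs0 : 0 < s := by positivity
    have hs1 : s ≤ 1 := by
      rw [hs, div_le_one (by linarith)]; linarith
    have hcomb : s•x + (1-s)•a = (1/2:ℝ)•a + (1/2:ℝ)•b := by
      rw [← hx']
      match_scalars
      · simp only [hs]; field_simp; linarith
      · simp only [hs]; field_simp
    have hineq := (hconv i).2 (hseg ⟨u, v, hu, hv, huv, hx'⟩) (hseg ha)
      hs0.le (by linarith : (0:ℝ) ≤ 1 - s) (by ring)
    rw [hcomb, hic, hia] at hineq
    simp only [smul_eq_mul] at hineq
    nlinarith [hs0, hineq]
  · -- u ≥ 1/2; write midpoint as convex combination of x and b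
    have hune : u ≠ 0 := by linarith
    set s : ℝ := 1/(2*u) with hs
    have hs0 : 0 < s := by positivity
    have hs1 : s ≤ 1 := by
      rw [hs, div_le_one (by linarith)]; linarith
    have hcomb : s•x + (1-s)•b = (1/2:ℝ)•a + (1/2:ℝ)•b := by
      rw [← hx']
      match_scalars
      · simp only [hs]; field_simp
      · simp only [hs]; field_simp; linarith
    have hineq := (hconv i).2 (hseg ⟨u, v, hu, hv, huv, hx'⟩) (hseg hb)
      hs0.le (by linarith : (0:ℝ) ≤ 1 - s) (by ring)
    rw [hcomb, hic, hib] at hineq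
    simp only [smul_eq_mul] at hineq
    nlinarith [hs0, hineq]
end
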